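/- arXiv:2009.13308 — 3 statements merged into one kernel-verified Lean document; each statement's English description precedes it below -/
import Mathlib

section
/- Let E be a Banach space, Z a Banach space, and V : E → Z* a linear isometry onto its image such that V(E) is weak-star closed in Z*. Then E is isometrically isomorphic to the dual of the Banach space Z / (^⊥V(E)), where ^⊥V(E) = {z ∈ Z : φ(z) = 0 for all φ ∈ V(E)}. -/
/-!
Every `V x` vanishes on `N = ⊥V(E)`, so it factors through `Z ⧸ N` with the same norm; this gives
a linear isometry `E → (Z ⧸ N)*`. It is onto because a weak-star closed subspace of `Z*` is the
annihilator of its pre-annihilator: by Hahn–Banach in the locally convex space `σ(Z*, Z)`, a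
functional outside the subspace is separated from it by a weak-star continuous functional, and
those are evaluations at points of `Z`.
-/

open NormedSpace

/-- The pre-annihilator in `Z` of the image of `V : E → Z*`. -/
noncomputable def preAnnihilator {E Z : Type*}
    [NormedAddCommGroup E] [NormedSpace ℝ E]
    [NormedAddCommGroup Z] [NormedSpace ℝ Z]
    (V : E →ₗᵢ[ℝ] (Z →L[ℝ] ℝ)) : Submodule ℝ Z where
  carrier := {z | ∀ x : E, V x z = 0}
  add_mem' {a b} ha hb x := by simp [ha x, hb x]
  zero_mem' x := by simp
  smul_mem' c z hz x := by simp [hz x]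

theorem Submodule.exists_dual_eq_zero_of_isClosed_of_notMem {X : Type*} [AddCommGroup X]
    [Module ℝ X] [TopologicalSpace X] [IsTopologicalAddGroup X] [ContinuousSMul ℝ X]
    [LocallyConvexSpace ℝ X] {S : Submodule ℝ X} (hS : IsClosed (S : Set X)) {x : X}
    (hx : x ∉ S) : ∃ f : StrongDual ℝ X, (∀ y ∈ S, f y = 0) ∧ f x ≠ 0 := by
  obtain ⟨f, u, hfx, hfS⟩ := geometric_hahn_banach_point_closed S.convex hS hx
  have hu : u < 0 := by simpa using hfS 0 S.zero_mem
  -- `f` is bounded below by `u` on the subspace `S`, so it vanishes there.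
  have hf : ∀ y ∈ S, f y = 0 := by
    intro y hy
    by_contra hne
    simpa [div_mul_cancel₀ _ hne] using hfS _ (S.smul_mem (u / f y) hy)
  exact ⟨f, hf, (hfx.trans hu).ne⟩

theorem WeakBilin.mem_of_isClosed_of_forall_eq_zero {E F : Type*} [AddCommGroup E] [Module ℝ E]
    [AddCommGroup F] [Module ℝ F] {B : E →ₗ[ℝ] F →ₗ[ℝ] ℝ} {W : Submodule ℝ (WeakBilin B)}
    (hW : IsClosed (W : Set (WeakBilin B))) {x : WeakBilin B}
    (hx : ∀ y, (∀ w ∈ W, B w y = 0) → B x y = 0) : x ∈ W := by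
  by_contra hxW
  obtain ⟨f, hfW, hfx⟩ := Submodule.exists_dual_eq_zero_of_isClosed_of_notMem hW hxW
  obtain ⟨y, rfl⟩ := LinearMap.dualEmbedding_surjective B f
  exact hfx (hx y hfW)

theorem Submodule.norm_liftQL {𝕜 Z F : Type*} [NontriviallyNormedField 𝕜]
    [SeminormedAddCommGroup Z] [NormedSpace 𝕜 Z] [SeminormedAddCommGroup F] [NormedSpace 𝕜 F]
    (N : Submodule 𝕜 Z) (f : Z →L[𝕜] F) (h : N ≤ f.ker) : ‖N.liftQL f h‖ = ‖f‖ := by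
  refine le_antisymm ?_ ?_
  · refine ContinuousLinearMap.opNorm_le_bound _ (norm_nonneg f) fun q => ?_
    let g := (f : Z →+ F).mkNormedAddGroupHom ‖f‖ f.le_opNorm
    calc ‖N.liftQL f h q‖ ≤ ‖g‖ * ‖q‖ :=
          QuotientAddGroup.norm_lift_apply_le g (fun z hz => h hz) q
      _ ≤ ‖f‖ * ‖q‖ := by
        gcongr; exact NormedAddGroupHom.mkNormedAddGroupHom_norm_le _ (norm_nonneg f) _
  · refine ContinuousLinearMap.opNorm_le_bound _ (norm_nonneg _) fun z => ?_
    calc ‖f z‖ = ‖N.liftQL f h (N.mkQ z)‖ := rfl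
      _ ≤ ‖N.liftQL f h‖ * ‖N.mkQ z‖ := (N.liftQL f h).le_opNorm _
      _ ≤ ‖N.liftQL f h‖ * ‖z‖ := by gcongr; exact Submodule.Quotient.norm_mk_le N z

section QuotientDual

variable {E Z : Type*} [NormedAddCommGroup E] [NormedSpace ℝ E] [NormedAddCommGroup Z]
  [NormedSpace ℝ Z] (V : E →ₗᵢ[ℝ] (Z →L[ℝ] ℝ))

theorem preAnnihilator_le_ker (x : E) : preAnnihilator V ≤ (V x).ker := fun _ hz => hz x

noncomputable def toQuotientDual : E →ₗᵢ[ℝ] ((Z ⧸ preAnnihilator V) →L[ℝ] ℝ) where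
  toFun x := (preAnnihilator V).liftQL (V x) (preAnnihilator_le_ker V x)
  map_add' x y := by
    ext q
    obtain ⟨z, rfl⟩ := (preAnnihilator V).mkQ_surjective q
    simp
  map_smul' c x := by
    ext q
    obtain ⟨z, rfl⟩ := (preAnnihilator V).mkQ_surjective q
    simp
  norm_map' x := (Submodule.norm_liftQL _ _ _).trans (V.norm_map x)

theorem exists_eq_of_preAnnihilator_le_ker
    (hclosed : IsClosed ((fun f => StrongDual.toWeakDual f) ''
      (Set.range fun x => V x) : Set (WeakDual ℝ Z)))
    (g : Z →L[ℝ] ℝ) (hg : preAnnihilator V ≤ g.ker) : ∃ x, V x = g := by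
  let W : Submodule ℝ (WeakDual ℝ Z) :=
    (LinearMap.range V.toLinearMap).map StrongDual.toWeakDual.toLinearMap
  have hW : IsClosed (W : Set (WeakDual ℝ Z)) := by
    convert hclosed
    ext; simp [W]
  have hgW : StrongDual.toWeakDual g ∈ W := by
    refine WeakBilin.mem_of_isClosed_of_forall_eq_zero hW fun z hz => hg fun x => ?_
    exact hz _ ⟨V x, ⟨x, rfl⟩, rfl⟩
  obtain ⟨_, ⟨x, rfl⟩, hx⟩ := hgW
  exact ⟨x, StrongDual.toWeakDual.injective hx⟩

theorem toQuotientDual_surjective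
    (hclosed : IsClosed ((fun f => StrongDual.toWeakDual f) ''
      (Set.range fun x => V x) : Set (WeakDual ℝ Z))) :
    Function.Surjective (toQuotientDual V) := by
  intro g
  obtain ⟨x, hx⟩ := exists_eq_of_preAnnihilator_le_ker V hclosed (g.comp (preAnnihilator V).mkQL)
    fun z hz => by simp [(Submodule.Quotient.mk_eq_zero _).2 hz]
  refine ⟨x, ?_⟩
  ext q
  obtain ⟨z, rfl⟩ := (preAnnihilator V).mkQ_surjective q
  exact congr($hx z)

end QuotientDual

theorem isometric_dual_of_weakStarClosed_embedding_general
    (E Z : Type*) [NormedAddCommGroup E] [NormedSpace ℝ E]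
    [NormedAddCommGroup Z] [NormedSpace ℝ Z]
    (V : E →ₗᵢ[ℝ] (Z →L[ℝ] ℝ))
    (hclosed : IsClosed ((fun f => StrongDual.toWeakDual f) ''
      (Set.range fun x => V x) : Set (WeakDual ℝ Z))) :
    ∃ e : E ≃ₗᵢ[ℝ] ((Z ⧸ preAnnihilator V) →L[ℝ] ℝ),
      ∀ (x : E) (z : Z), e x (Submodule.Quotient.mk z) = V x z :=
  ⟨.ofSurjective (toQuotientDual V) (toQuotientDual_surjective V hclosed), fun _ _ => rfl⟩

/-- If `V : E → Z*` is a linear isometric embedding whose image is weak-star closed in `Z*`,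
then `E` is isometrically isomorphic to the dual of the Banach space `Z / (^⊥V(E))`. -/
theorem isometric_dual_of_weakStarClosed_embedding
    (E Z : Type*) [NormedAddCommGroup E] [NormedSpace ℝ E] [CompleteSpace E]
    [NormedAddCommGroup Z] [NormedSpace ℝ Z] [CompleteSpace Z]
    (V : E →ₗᵢ[ℝ] (Z →L[ℝ] ℝ))
    (hclosed : IsClosed ((fun f => StrongDual.toWeakDual f) ''
      (Set.range fun x => V x) : Set (WeakDual ℝ Z))) :
    ∃ e : E ≃ₗᵢ[ℝ] ((Z ⧸ preAnnihilator V) →L[ℝ] ℝ),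
      ∀ (x : E) (z : Z), e x (Submodule.Quotient.mk z) = V x z :=
  isometric_dual_of_weakStarClosed_embedding_general E Z V hclosed
end

section
/- Let X be a reflexive Banach space, F ⊆ X* a family of functionals, and E = {x ∈ X : ‖x‖_E := sup_{f∈F} |f(x)| < ∞}, assumed to be a Banach space continuously embedded in X. Then the closed unit ball of E is compact in the topology σ(E, F). -/
/-!
The unit ball `K = {x | ∀ f ∈ F, |f x| ≤ 1}` of `E` is the polar of `F`, hence weakly closed, and
the continuous embedding puts it inside the norm ball of radius `λ`. In a reflexive space
bounded weakly closed sets are weakly compact (Banach–Alaoglu in the bidual), and `σ(E, F)` is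
coarser than the weak topology, so `K` stays compact there.
-/

open NormedSpace Bornology

theorem NormedSpace.isCompact_of_isClosed_of_isBounded_of_surjective {𝕜 X : Type*} [RCLike 𝕜]
    [NormedAddCommGroup X] [NormedSpace 𝕜 X]
    (hrefl : Function.Surjective (inclusionInDoubleDual 𝕜 X)) {S : Set (WeakSpace 𝕜 X)}
    (hc : IsClosed S) (hb : IsBounded ((toWeakSpace 𝕜 X) ⁻¹' S)) : IsCompact S := by
  have hrange : Set.range (inclusionInDoubleDualWeak 𝕜 X) = Set.univ :=
    Set.range_eq_univ.2 fun φ => hrefl (WeakDual.toStrongDual φ)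
  simpa [hc.closure_eq] using
    isCompact_closure_of_isBounded 𝕜 X S hb (hrange ▸ Set.subset_univ _)

theorem IsCompact.induced {α β : Type*} [TopologicalSpace α] [tβ : TopologicalSpace β]
    {φ : α → β} (hφ : Continuous φ) {s : Set α} (hs : IsCompact s) :
    @IsCompact α (tβ.induced φ) s := by
  simpa using @IsCompact.image _ _ _ (tβ.induced φ) _ id hs (continuous_induced_rng.2 hφ)

theorem unit_ball_sigmaEF_compact_of_reflexive_general
    (X : Type*) [NormedAddCommGroup X] [NormedSpace ℝ X]
    (hrefl : Function.Surjective (NormedSpace.inclusionInDoubleDual ℝ X))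
    (F : Set (StrongDual ℝ X)) (lam : ℝ) (hlam : 0 < lam)
    (hemb : ∀ x : X, BddAbove (Set.range fun f : F => |(f : StrongDual ℝ X) x|) →
      ‖x‖ ≤ lam * ⨆ f : F, |(f : StrongDual ℝ X) x|) :
    @IsCompact X
      (TopologicalSpace.induced (fun (x : X) (f : F) => (f : StrongDual ℝ X) x)
        Pi.topologicalSpace)
      {x : X | ∀ f ∈ F, |f x| ≤ 1} := by
  have hball : {x : X | ∀ f ∈ F, |f x| ≤ 1} ⊆ Metric.closedBall 0 lam := by
    intro x hx
    rw [mem_closedBall_zero_iff]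
    have hsup : ⨆ f : F, |(f : StrongDual ℝ X) x| ≤ 1 :=
      Real.iSup_le (fun f => hx f f.2) zero_le_one
    calc ‖x‖ ≤ lam * ⨆ f : F, |(f : StrongDual ℝ X) x| :=
          hemb x ⟨1, Set.forall_mem_range.2 fun f => hx f f.2⟩
      _ ≤ lam := mul_le_of_le_one_right hlam.le hsup
  have hweak : IsCompact (X := WeakSpace ℝ X) {x : X | ∀ f ∈ F, |f x| ≤ 1} :=
    isCompact_of_isClosed_of_isBounded_of_surjective hrefl
      ((topDualPairing ℝ X).polar_isClosed F) (Metric.isBounded_closedBall.subset hball)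
  exact hweak.induced (continuous_pi fun f : F => WeakBilin.eval_continuous _ f.1)

/-- Let `X` be a reflexive Banach space, `F ⊆ X*`, and `E = {x : sup_{f∈F}|f(x)| < ∞}` with the
norm `‖x‖_E = sup_{f∈F}|f(x)|`, continuously embedded in `X`. Then the closed unit ball of `E`,
namely `{x : |f(x)| ≤ 1 ∀ f ∈ F}`, is compact in the topology `σ(E, F)` of pointwise
convergence against `F`. -/
theorem unit_ball_sigmaEF_compact_of_reflexive
    (X : Type*) [NormedAddCommGroup X] [NormedSpace ℝ X] [CompleteSpace X]
    (hrefl : Function.Surjective (NormedSpace.inclusionInDoubleDual ℝ X))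
    (F : Set (StrongDual ℝ X)) (lam : ℝ) (hlam : 0 < lam)
    (hemb : ∀ x : X, BddAbove (Set.range fun f : F => |(f : StrongDual ℝ X) x|) →
      ‖x‖ ≤ lam * ⨆ f : F, |(f : StrongDual ℝ X) x|) :
    @IsCompact X
      (TopologicalSpace.induced (fun (x : X) (f : F) => (f : StrongDual ℝ X) x)
        Pi.topologicalSpace)
      {x : X | ∀ f ∈ F, |f x| ≤ 1} :=
  unit_ball_sigmaEF_compact_of_reflexive_general X hrefl F lam hlam hemb
end

section
/- Let E be a Banach space with countable norming set F = {f_j} ⊆ E*, V : E → ℓ^∞ the associated isometry, and E_C defined from an M-embedded predual C of ℓ¹ such that the approximation property (AP) holds. Then for every x ∈ E the distance formula dist_E(x, E_C) = limsup_{j→∞} |f_j(x)| holds. -/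
open NormedSpace Filter
open scoped ENNReal

/-- The embedding `V : E → ℓ^∞`, `V(x) = (f_n(x))_n`, as a linear map. -/
noncomputable def Vlin (E : Type*) [NormedAddCommGroup E] [NormedSpace ℝ E]
    (f : ℕ → StrongDual ℝ E) (hb : ∀ x : E, BddAbove (Set.range fun n => ‖f n x‖)) :
    E →ₗ[ℝ] lp (fun _ : ℕ => ℝ) ∞ where
  toFun x := ⟨fun n => f n x, memℓp_infty (hb x)⟩
  map_add' x y := lp.ext (funext fun n => map_add (f n) x y)
  map_smul' c x := lp.ext (funext fun n => map_smul (f n) c x)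

/-!
Every `η ∈ C` is a null sequence. Indeed, for a free ultrafilter `U` write `lim_U = ⟨ξ, ·⟩ + ms` as
in the M-decomposition. Testing against the sequence equal to `1` except for `-sign ξ_k` at `k`
gives `1 ≤ ‖ξ‖ - 2|ξ_k| + ‖ms‖ ≤ 1 - 2|ξ_k|`, so `ξ = 0` and `lim_U η = ms η = 0`. Hence
`limsup |f_j x| ≤ ‖x - y‖` for every `y ∈ E_C`.

Conversely, (AP) provides elements `u_i ∈ E_C`, bounded by `M`, with `u_i` close to `x` on the
coordinates up to `N_i` and small from `N_{i+1}` on (a gliding hump). Each coordinate lies strictly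
inside at most one hump `(N_i, N_{i+1})`, so the average of `u_0, …, u_{K-1}` is within
`limsup |f_j x| + ε + O(M/K)` of `x` in every coordinate, and the norming property turns this into a
bound on `‖x - z‖`.
-/

namespace DistanceFormula

open Topology

local notation "ℓ∞" => lp (fun _ : ℕ => ℝ) ∞

lemma exists_tendsto_ultrafilter (U : Ultrafilter ℕ) (ζ : ℓ∞) :
    ∃ a, Tendsto (fun n => ζ n) U (𝓝 a) := by
  obtain ⟨a, -, ha⟩ := (isCompact_closedBall (0 : ℝ) ‖ζ‖).ultrafilter_le_nhds (U.map fun n => ζ n)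
    (le_principal_iff.2 <| mem_map.2 <| univ_mem' fun n => by
      simpa using lp.norm_apply_le_norm ENNReal.top_ne_zero ζ n)
  exact ⟨a, ha⟩

lemma tendsto_limUnder_ultrafilter (U : Ultrafilter ℕ) (ζ : ℓ∞) :
    Tendsto (fun n => ζ n) U (𝓝 (limUnder (U : Filter ℕ) fun n => ζ n)) :=
  tendsto_nhds_limUnder (exists_tendsto_ultrafilter U ζ)

noncomputable def ultraLim (U : Ultrafilter ℕ) : StrongDual ℝ ℓ∞ :=
  LinearMap.mkContinuous
    { toFun := fun ζ => limUnder (U : Filter ℕ) fun n => ζ n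
      map_add' := fun ζ η => tendsto_nhds_unique (tendsto_limUnder_ultrafilter U (ζ + η))
        ((tendsto_limUnder_ultrafilter U ζ).add (tendsto_limUnder_ultrafilter U η))
      map_smul' := fun c ζ => tendsto_nhds_unique (tendsto_limUnder_ultrafilter U (c • ζ))
        ((tendsto_limUnder_ultrafilter U ζ).const_smul c) }
    1 fun ζ => by
      rw [one_mul]
      refine le_of_tendsto (tendsto_limUnder_ultrafilter U ζ).norm (univ_mem' fun n => ?_)
      exact lp.norm_apply_le_norm ENNReal.top_ne_zero ζ n

lemma tendsto_ultraLim (U : Ultrafilter ℕ) (ζ : ℓ∞) :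
    Tendsto (fun n => ζ n) U (𝓝 (ultraLim U ζ)) :=
  tendsto_limUnder_ultrafilter U ζ

lemma ultraLim_eq_of_tendsto {U : Ultrafilter ℕ} {ζ : ℓ∞} {a : ℝ}
    (h : Tendsto (fun n => ζ n) U (𝓝 a)) : ultraLim U ζ = a :=
  tendsto_nhds_unique (tendsto_ultraLim U ζ) h

lemma norm_ultraLim_le (U : Ultrafilter ℕ) : ‖ultraLim U‖ ≤ 1 :=
  LinearMap.mkContinuous_norm_le _ zero_le_one _

lemma tsum_mul_le_norm_sub (ξ : lp (fun _ : ℕ => ℝ) 1) {ζ : ℓ∞} (hζ : ‖ζ‖ ≤ 1) (k : ℕ) :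
    ∑' n, ξ n * ζ n ≤ ‖ξ‖ - (|ξ k| - ξ k * ζ k) := by
  have hξ : Summable fun n => |ξ n| := by simpa using ξ.2.summable
  have hle : ∀ n, |ξ n * ζ n| ≤ |ξ n| := fun n => by
    rw [abs_mul]
    refine mul_le_of_le_one_right (abs_nonneg _) ?_
    simpa using (lp.norm_apply_le_norm ENNReal.top_ne_zero ζ n).trans hζ
  have hξζ : Summable fun n => ξ n * ζ n := .of_norm_bounded hξ hle
  have hgap : |ξ k| - ξ k * ζ k ≤ ∑' n, (|ξ n| - ξ n * ζ n) :=
    (hξ.sub hξζ).le_tsum k fun n _ => sub_nonneg.2 ((le_abs_self _).trans (hle n))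
  have hnorm : ‖ξ‖ = ∑' n, |ξ n| := by simpa using lp.norm_eq_tsum_rpow (by simp) ξ
  rw [hξ.tsum_sub hξζ, ← hnorm] at hgap
  linarith

lemma exists_update_one (k : ℕ) {c : ℝ} (hc : |c| ≤ 1) :
    ∃ ζ : ℓ∞, ‖ζ‖ ≤ 1 ∧ ζ k = c ∧ ∀ n ≠ k, ζ n = 1 := by
  have hbound : ∀ n, ‖Function.update (1 : ℕ → ℝ) k c n‖ ≤ 1 := fun n => by
    rcases eq_or_ne n k with rfl | hn <;> simp [*]
  exact ⟨⟨_, memℓp_infty ⟨1, Set.forall_mem_range.2 hbound⟩⟩,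
    lp.norm_le_of_forall_le zero_le_one hbound, by simp, fun n hn => by simp [hn]⟩

lemma eq_zero_of_ultraLim_eq_add {U : Ultrafilter ℕ} (hU : (U : Filter ℕ) ≤ atTop)
    {ξ : lp (fun _ : ℕ => ℝ) 1} {ms : StrongDual ℝ ℓ∞}
    (hm : ∀ η : ℓ∞, ultraLim U η = ∑' n, ξ n * η n + ms η) (hnorm : ‖ultraLim U‖ = ‖ξ‖ + ‖ms‖) :
    ξ = 0 := by
  ext k
  obtain ⟨ζ, hζ, hζk, hζ1⟩ := exists_update_one k (c := -SignType.sign (ξ k)) (by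
    rcases lt_trichotomy (ξ k) 0 with h | h | h <;> simp [h])
  have hlim : ultraLim U ζ = 1 :=
    ultraLim_eq_of_tendsto <| tendsto_const_nhds.congr' <|
      ((eventually_ne_atTop k).filter_mono hU).mono fun n hn => (hζ1 n hn).symm
  have hms : ms ζ ≤ ‖ms‖ :=
    (le_abs_self _).trans <| (ms.le_opNorm ζ).trans (mul_le_of_le_one_right (norm_nonneg _) hζ)
  have hsum := tsum_mul_le_norm_sub ξ hζ k
  rw [hζk, mul_neg, self_mul_sign] at hsum
  have key : 1 ≤ 1 - 2 * |ξ k| := calc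
    1 = ∑' n, ξ n * ζ n + ms ζ := hlim ▸ hm ζ
    _ ≤ ‖ξ‖ - 2 * |ξ k| + ‖ms‖ := by linarith
    _ ≤ 1 - 2 * |ξ k| := by linarith [norm_ultraLim_le U]
  rw [lp.coeFn_zero, Pi.zero_apply, ← abs_nonpos_iff]
  linarith

theorem tendsto_zero_of_mem {C : Submodule ℝ ℓ∞}
    (hM : ∀ m : StrongDual ℝ ℓ∞, ∃ ξ : lp (fun _ : ℕ => ℝ) 1, ∃ ms : StrongDual ℝ ℓ∞,
      (∀ η : ℓ∞, m η = (∑' n : ℕ, ξ n * η n) + ms η) ∧ (∀ η ∈ C, ms η = 0) ∧ ‖m‖ = ‖ξ‖ + ‖ms‖)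
    {η : ℓ∞} (hη : η ∈ C) : Tendsto (fun n => η n) atTop (𝓝 0) := by
  refine (tendsto_iff_ultrafilter _ _ _).2 fun U hU => ?_
  obtain ⟨ξ, ms, hm, hms, hnorm⟩ := hM (ultraLim U)
  obtain rfl := eq_zero_of_ultraLim_eq_add hU hm hnorm
  simpa [hm, hms η hη] using tendsto_ultraLim U η

section GlidingHump

variable {a : ℕ → ℝ} {b : ℕ → ℕ → ℝ} {L M ε : ℝ}

lemma sum_ite_mem_Ioo_le {N : ℕ → ℕ} (hN : StrictMono N) {M : ℝ} (hM : 0 ≤ M) (K n : ℕ) :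
    ∑ i ∈ Finset.range K, (if n ∈ Set.Ioo (N i) (N (i + 1)) then M else 0) ≤ M := by
  have hcard : ((Finset.range K).filter fun i => n ∈ Set.Ioo (N i) (N (i + 1))).card ≤ 1 := by
    refine Finset.card_le_one.2 fun i hi i' hi' => ?_
    simp only [Finset.mem_filter, Set.mem_Ioo] at hi hi'
    rcases lt_trichotomy i i' with h | h | h
    · have : N (i + 1) ≤ N i' := hN.monotone h; omega
    · exact h
    · have : N (i' + 1) ≤ N i := hN.monotone h; omega
  rw [Finset.sum_ite, Finset.sum_const_zero, add_zero, Finset.sum_const, nsmul_eq_mul]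
  exact mul_le_of_le_one_left hM (by exact_mod_cast hcard)

lemma abs_sub_le_of_gliding_hump {N : ℕ → ℕ} (hN : StrictMono N)
    (ha : ∀ n ≥ N 0, |a n| ≤ L) (hhead : ∀ i, ∀ n ≤ N i, |b i n - a n| ≤ ε)
    (htail : ∀ i, ∀ n ≥ N (i + 1), |b i n| ≤ ε) (hbM : ∀ i n, |b i n| ≤ M) (i n : ℕ) :
    |a n - b i n| ≤ L + ε + if n ∈ Set.Ioo (N i) (N (i + 1)) then L + M else 0 := by
  have hL : 0 ≤ L := (abs_nonneg _).trans (ha (N 0) le_rfl)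
  have hε : 0 ≤ ε := (abs_nonneg _).trans (hhead 0 0 (Nat.zero_le _))
  have htri : |a n - b i n| ≤ |a n| + |b i n| := abs_sub _ _
  have hbelow : N 0 ≤ N i := hN.monotone (Nat.zero_le i)
  split_ifs with hn
  · linarith [ha n (hbelow.trans hn.1.le), hbM i n]
  · rcases le_or_gt n (N i) with hle | hgt
    · linarith [abs_sub_comm (a n) (b i n), hhead i n hle]
    · have hge : N (i + 1) ≤ n := not_lt.1 fun hlt => hn ⟨hgt, hlt⟩
      linarith [ha n (hbelow.trans hgt.le), htail i n hge]

lemma abs_sub_average_le {N : ℕ → ℕ} (hN : StrictMono N)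
    (ha : ∀ n ≥ N 0, |a n| ≤ L) (hhead : ∀ i, ∀ n ≤ N i, |b i n - a n| ≤ ε)
    (htail : ∀ i, ∀ n ≥ N (i + 1), |b i n| ≤ ε) (hbM : ∀ i n, |b i n| ≤ M)
    {K : ℕ} (hK : 0 < K) (n : ℕ) :
    |a n - (K : ℝ)⁻¹ * ∑ i ∈ Finset.range K, b i n| ≤ L + ε + (L + M) / K := by
  have hK' : (0 : ℝ) < K := Nat.cast_pos.2 hK
  have hLM : 0 ≤ L + M := by
    linarith [(abs_nonneg _).trans (ha (N 0) le_rfl), (abs_nonneg _).trans (hbM 0 0)]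
  have hsum : ∑ i ∈ Finset.range K, |a n - b i n| ≤ K * (L + ε) + (L + M) := by
    calc ∑ i ∈ Finset.range K, |a n - b i n|
        ≤ ∑ i ∈ Finset.range K, (L + ε + if n ∈ Set.Ioo (N i) (N (i + 1)) then L + M else 0) :=
          Finset.sum_le_sum fun i _ => abs_sub_le_of_gliding_hump hN ha hhead htail hbM i n
      _ ≤ K * (L + ε) + (L + M) := by
          rw [Finset.sum_add_distrib, Finset.sum_const, Finset.card_range, nsmul_eq_mul]
          linarith [sum_ite_mem_Ioo_le hN hLM K n]
  have hdiff : a n - (K : ℝ)⁻¹ * ∑ i ∈ Finset.range K, b i n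
      = (K : ℝ)⁻¹ * ∑ i ∈ Finset.range K, (a n - b i n) := by
    rw [Finset.sum_sub_distrib, Finset.sum_const, Finset.card_range, nsmul_eq_mul]
    field_simp
  rw [hdiff, abs_mul, abs_of_pos (inv_pos.2 hK')]
  calc (K : ℝ)⁻¹ * |∑ i ∈ Finset.range K, (a n - b i n)|
      ≤ (K : ℝ)⁻¹ * (K * (L + ε) + (L + M)) :=
        mul_le_mul_of_nonneg_left ((Finset.abs_sum_le_sum_abs _ _).trans hsum) (by positivity)
    _ = L + ε + (L + M) / K := by field_simp

lemma exists_average_close (ha : ∀ᶠ n in atTop, |a n| ≤ L)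
    (hb0 : ∀ j, Tendsto (b j) atTop (𝓝 0)) (hbM : ∀ j n, |b j n| ≤ M)
    (hba : ∀ n, Tendsto (fun j => b j n) atTop (𝓝 (a n))) (hε : 0 < ε) :
    ∃ K : ℕ, 0 < K ∧ ∃ idx : ℕ → ℕ,
      ∀ n, |a n - (K : ℝ)⁻¹ * ∑ i ∈ Finset.range K, b (idx i) n| ≤ L + ε := by
  have hδ : 0 < ε / 2 := half_pos hε
  obtain ⟨N₀, hN₀⟩ := eventually_atTop.1 ha
  have hhead : ∀ N, ∃ j, ∀ n ≤ N, |b j n - a n| ≤ ε / 2 := fun N =>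
    ((eventually_all_finite (Set.finite_Iic N)).2 fun n _ =>
      (Metric.tendsto_nhds.1 (hba n) _ hδ).mono fun j hj => (Real.dist_eq _ _ ▸ hj).le).exists
  have htail : ∀ j N, ∃ N' > N, ∀ n ≥ N', |b j n| ≤ ε / 2 := fun j N => by
    obtain ⟨N', hN', hgt⟩ := ((eventually_forall_ge_atTop.2
      (Metric.tendsto_nhds.1 (hb0 j) _ hδ)).and (eventually_gt_atTop N)).exists
    exact ⟨N', hgt, fun n hn => by simpa using (hN' n hn).le⟩
  choose j hj using hhead
  choose T hT hT' using htail
  -- the humps: `b (j (N i))` is `ε/2`-close to `a` up to `N i` and `ε/2`-small from `N (i + 1)` on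
  let N : ℕ → ℕ := fun i => Nat.rec N₀ (fun _ m => T (j m) m) i
  have hN : StrictMono N := strictMono_nat_of_lt_succ fun i => hT (j (N i)) (N i)
  obtain ⟨K, hK⟩ := exists_nat_gt ((L + M) / (ε / 2))
  refine ⟨K + 1, K.succ_pos, fun i => j (N i), fun n => ?_⟩
  have hclose := abs_sub_average_le (b := fun i => b (j (N i))) hN hN₀ (fun i => hj (N i))
    (fun i => hT' _ _) (fun i => hbM _) K.succ_pos n
  have hsmall : (L + M) / (K + 1 : ℕ) ≤ ε / 2 := by
    rw [div_lt_iff₀ hδ] at hK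
    rw [div_le_iff₀ (by positivity), Nat.cast_succ]
    linarith
  linarith

end GlidingHump

section Norming

variable {E : Type*} [NormedAddCommGroup E] [NormedSpace ℝ E] {f : ℕ → StrongDual ℝ E}

lemma limsup_abs_le_norm_sub (hf : ∀ z n, |f n z| ≤ ‖z‖) (x : E) {y : E}
    (hy : Tendsto (fun n => f n y) atTop (𝓝 0)) :
    limsup (fun n => |f n x|) atTop ≤ ‖x - y‖ := by
  refine le_of_forall_pos_le_add fun ε hε => limsup_le_of_le
    (isCoboundedUnder_le_of_le atTop fun n => abs_nonneg _) ?_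
  filter_upwards [hy.abs.eventually_lt_const (by simpa using hε)] with n hn
  have := hf (x - y) n
  rw [map_sub] at this
  linarith [abs_sub_abs_le_abs_sub (f n x) (f n y), show |f n y| < ε by simpa using hn]

lemma exists_mem_norm_sub_le (hnorming : ∀ x : E, IsLUB (Set.range fun n => |f n x|) ‖x‖)
    {S : Submodule ℝ E} (hS : ∀ y ∈ S, Tendsto (fun n => f n y) atTop (𝓝 0)) {x : E}
    {y : ℕ → E} (hyS : ∀ j, y j ∈ S) (hyM : ∃ M, ∀ j, ‖y j‖ ≤ M)
    (hyx : ∀ n, Tendsto (fun j => f n (y j)) atTop (𝓝 (f n x))) {ε : ℝ} (hε : 0 < ε) :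
    ∃ z ∈ S, ‖x - z‖ ≤ limsup (fun n => |f n x|) atTop + ε := by
  have hf : ∀ z n, |f n z| ≤ ‖z‖ := fun z n => (hnorming z).1 ⟨n, rfl⟩
  obtain ⟨M, hM⟩ := hyM
  have ha : ∀ᶠ n in atTop, |f n x| ≤ limsup (fun n => |f n x|) atTop + ε / 2 :=
    (eventually_lt_of_limsup_lt (by linarith) (isBoundedUnder_of ⟨‖x‖, hf x⟩)).mono
      fun _ => le_of_lt
  obtain ⟨K, -, idx, hK⟩ := exists_average_close ha (fun j => hS _ (hyS j))
    (fun j n => (hf _ n).trans (hM j)) hyx (half_pos hε)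
  refine ⟨(K : ℝ)⁻¹ • ∑ i ∈ Finset.range K, y (idx i),
    S.smul_mem _ (S.sum_mem fun i _ => hyS _), (isLUB_le_iff (hnorming _)).2 ?_⟩
  rintro _ ⟨n, rfl⟩
  simpa [map_sub, map_sum, add_assoc] using hK n

end Norming

end DistanceFormula

theorem distance_formula_to_EC_general
    (E : Type*) [NormedAddCommGroup E] [NormedSpace ℝ E]
    (f : ℕ → StrongDual ℝ E)
    (hnorming : ∀ x : E, IsLUB (Set.range fun n => |f n x|) ‖x‖)
    (hb : ∀ x : E, BddAbove (Set.range fun n => ‖f n x‖))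
    (C : Submodule ℝ (lp (fun _ : ℕ => ℝ) ∞))
    (hM : ∀ m : StrongDual ℝ (lp (fun _ : ℕ => ℝ) ∞),
      ∃ ξ : lp (fun _ : ℕ => ℝ) 1, ∃ ms : StrongDual ℝ (lp (fun _ : ℕ => ℝ) ∞),
        (∀ η : lp (fun _ : ℕ => ℝ) ∞, m η = (∑' n : ℕ, ξ n * η n) + ms η) ∧
        (∀ η ∈ C, ms η = 0) ∧ ‖m‖ = ‖ξ‖ + ‖ms‖)
    (hAP : ∀ x : E, ∃ y : ℕ → E,
      (∀ j, y j ∈ Submodule.comap (Vlin E f hb) C) ∧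
      (∃ M : ℝ, ∀ j, ‖y j‖ ≤ M) ∧
      (∀ n, Tendsto (fun j => f n (y j)) atTop (nhds (f n x)))) :
    ∀ x : E,
      sInf {r : ℝ | ∃ y ∈ Submodule.comap (Vlin E f hb) C, r = ‖x - y‖} =
        Filter.limsup (fun j => |f j x|) atTop := by
  intro x
  have hc0 : ∀ y ∈ Submodule.comap (Vlin E f hb) C, Tendsto (fun n => f n y) atTop (nhds 0) :=
    fun y hy => DistanceFormula.tendsto_zero_of_mem hM hy
  have hbdd : BddBelow {r : ℝ | ∃ y ∈ Submodule.comap (Vlin E f hb) C, r = ‖x - y‖} :=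
    ⟨0, by rintro _ ⟨y, -, rfl⟩; exact norm_nonneg _⟩
  refine le_antisymm (le_of_forall_pos_le_add fun ε hε => ?_)
    (le_csInf ⟨_, 0, zero_mem _, rfl⟩ ?_)
  · obtain ⟨y, hyC, hyM, hyx⟩ := hAP x
    obtain ⟨z, hzC, hxz⟩ := DistanceFormula.exists_mem_norm_sub_le hnorming hc0 hyC hyM hyx hε
    exact (csInf_le hbdd ⟨z, hzC, rfl⟩).trans hxz
  · rintro _ ⟨y, hy, rfl⟩
    exact DistanceFormula.limsup_abs_le_norm_sub (fun z n => (hnorming z).1 ⟨n, rfl⟩) x (hc0 y hy)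

/-- Distance formula: if `F = {f_j} ⊆ E*` is a countable norming set with `σ(E,F)`-compact
unit ball, `C ⊆ ℓ^∞` an M-embedded isometric predual of `ℓ¹` (i.e. `ba(ℕ) = ℓ¹ ⊕₁ C^⊥`),
`E_C = {x : V(x) ∈ C}`, and the approximation property (AP) holds, then
`dist_E(x, E_C) = limsup_j |f_j(x)|` for every `x ∈ E`. -/
theorem distance_formula_to_EC
    (E : Type*) [NormedAddCommGroup E] [NormedSpace ℝ E] [CompleteSpace E]
    (f : ℕ → StrongDual ℝ E)
    (hnorming : ∀ x : E, IsLUB (Set.range fun n => |f n x|) ‖x‖)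
    (hb : ∀ x : E, BddAbove (Set.range fun n => ‖f n x‖))
    (hcompact : @IsCompact E
      (TopologicalSpace.induced (fun (x : E) (n : ℕ) => f n x) Pi.topologicalSpace)
      (Metric.closedBall (0 : E) 1))
    (C : Submodule ℝ (lp (fun _ : ℕ => ℝ) ∞))
    (hCclosed : IsClosed (C : Set (lp (fun _ : ℕ => ℝ) ∞)))
    (hCpredual : Nonempty ((C →L[ℝ] ℝ) ≃ₗᵢ[ℝ] lp (fun _ : ℕ => ℝ) 1))
    (hM : ∀ m : StrongDual ℝ (lp (fun _ : ℕ => ℝ) ∞),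
      ∃ ξ : lp (fun _ : ℕ => ℝ) 1, ∃ ms : StrongDual ℝ (lp (fun _ : ℕ => ℝ) ∞),
        (∀ η : lp (fun _ : ℕ => ℝ) ∞, m η = (∑' n : ℕ, ξ n * η n) + ms η) ∧
        (∀ η ∈ C, ms η = 0) ∧ ‖m‖ = ‖ξ‖ + ‖ms‖)
    (hAP : ∀ x : E, ∃ y : ℕ → E,
      (∀ j, y j ∈ Submodule.comap (Vlin E f hb) C) ∧
      (∃ M : ℝ, ∀ j, ‖y j‖ ≤ M) ∧
      (∀ n, Tendsto (fun j => f n (y j)) atTop (nhds (f n x)))) :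
    ∀ x : E,
      sInf {r : ℝ | ∃ y ∈ Submodule.comap (Vlin E f hb) C, r = ‖x - y‖} =
        Filter.limsup (fun j => |f j x|) atTop :=
  distance_formula_to_EC_general E f hnorming hb C hM hAP
end
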